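/- arXiv:1804.00601 — 3 statements merged into one kernel-verified Lean document; each statement's English description precedes it below -/
import Mathlib

section
/- Let α > 0 and let φ : ℝ → ℝ be twice differentiable, bounded, and with bounded second derivative. Define ψ(t) = φ(t) − φ''(t)/α². Then sup_t |φ(t)| ≤ sup_t |ψ(t)|. -/
open Filter Real Set Topology

/-- At a global max of a differentiable function, any second derivative is ≤ 0. -/
lemma second_deriv_nonpos_at_max (f : ℝ → ℝ) (hf : Differentiable ℝ f) (a : ℝ)
    (hmax : ∀ y, f y ≤ f a) (L : ℝ) (hL : HasDerivAt (deriv f) L a) : L ≤ 0 := by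
  by_contra h
  push_neg at h
  have hda : deriv f a = 0 := by
    have : IsLocalMax f a := Filter.Eventually.of_forall fun y => hmax y
    exact this.deriv_eq_zero
  have hslope : Tendsto (slope (deriv f) a) (𝓝[≠] a) (𝓝 L) :=
    hasDerivAt_iff_tendsto_slope.1 hL
  have hslope' : Tendsto (slope (deriv f) a) (𝓝[>] a) (𝓝 L) :=
    hslope.mono_left (nhdsWithin_mono a fun x hx => ne_of_gt hx)
  have hev : ∀ᶠ x in 𝓝[>] a, 0 < slope (deriv f) a x :=
    hslope'.eventually (eventually_gt_nhds h)
  obtain ⟨u, hu, huI⟩ := mem_nhdsGT_iff_exists_Ioo_subset.1 hev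
  have hu' : a < u := hu
  set b := (a + u) / 2 with hb
  have hab : a < b := by rw [hb]; linarith
  have hbu : b < u := by rw [hb]; linarith
  have hpos : ∀ x ∈ Ioo a b, 0 < deriv f x := by
    intro x hx
    have hx' : x ∈ Ioo a u := ⟨hx.1, hx.2.trans hbu⟩
    have hs := huI hx'
    simp only [Set.mem_setOf_eq, slope_def_field, hda] at hs
    have hxa : 0 < x - a := by linarith [hx.1]
    rw [div_pos_iff] at hs
    rcases hs with ⟨h1, _⟩ | ⟨_, h2⟩
    · linarith
    · linarith
  have hmono : StrictMonoOn f (Icc a b) :=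
    strictMonoOn_of_deriv_pos (convex_Icc a b) hf.continuous.continuousOn
      (by rw [interior_Icc]; exact hpos)
  have : f a < f b := hmono ⟨le_refl a, hab.le⟩ ⟨hab.le, le_refl b⟩ hab
  linarith [hmax b]

/-- One-sided key lemma via a cosh perturbation / maximum principle. -/
lemma key_one_sided (α : ℝ) (hα : 0 < α) (φ : ℝ → ℝ) (hdiff : Differentiable ℝ φ)
    (hdiff2 : Differentiable ℝ (deriv φ)) (M : ℝ) (hM : ∀ t, φ t ≤ M)
    (N : ℝ) (hN : ∀ t, φ t - deriv (deriv φ) t / α ^ 2 ≤ N) (t0 : ℝ) :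
    φ t0 ≤ N := by
  refine le_of_forall_pos_le_add fun δ hδ => ?_
  set c : ℝ → ℝ := fun t => Real.cosh (α * (t - t0)) with hcdef
  have hc : ∀ t, HasDerivAt c (α * Real.sinh (α * (t - t0))) t := by
    intro t
    have h1 : HasDerivAt (fun t : ℝ => α * (t - t0)) α t := by
      simpa using ((hasDerivAt_id t).sub_const t0).const_mul α
    exact h1.cosh.congr_deriv (mul_comm _ _)
  have hc' : ∀ t, HasDerivAt (fun t => α * Real.sinh (α * (t - t0))) (α ^ 2 * c t) t := by
    intro t
    have h1 : HasDerivAt (fun t : ℝ => α * (t - t0)) α t := by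
      simpa using ((hasDerivAt_id t).sub_const t0).const_mul α
    have h2 : HasDerivAt (fun t : ℝ => Real.sinh (α * (t - t0)))
        (Real.cosh (α * (t - t0)) * α) t := h1.sinh
    have := h2.const_mul α
    refine this.congr_deriv ?_
    rw [hcdef]; ring
  set w : ℝ → ℝ := fun t => φ t - δ * c t with hwdef
  have hw : ∀ t, HasDerivAt w (deriv φ t - δ * (α * Real.sinh (α * (t - t0)))) t :=
    fun t => ((hdiff t).hasDerivAt).sub ((hc t).const_mul δ)
  have hwd : deriv w = fun t => deriv φ t - δ * (α * Real.sinh (α * (t - t0))) :=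
    funext fun t => (hw t).deriv
  have hw2 : ∀ t, HasDerivAt (deriv w) (deriv (deriv φ) t - δ * (α ^ 2 * c t)) t := by
    rw [hwd]
    exact fun t => ((hdiff2 t).hasDerivAt).sub ((hc' t).const_mul δ)
  -- cosh grows at both ends
  have hclim : Tendsto c (cocompact ℝ) atTop := by
    rw [cocompact_eq_atBot_atTop, tendsto_sup]
    have hcosh_ge : ∀ x : ℝ, Real.exp x / 2 ≤ Real.cosh x := by
      intro x
      rw [Real.cosh_eq]
      have := Real.exp_pos (-x)
      linarith
    have hcosh_ge' : ∀ x : ℝ, Real.exp (-x) / 2 ≤ Real.cosh x := by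
      intro x
      rw [Real.cosh_eq]
      have := Real.exp_pos x
      linarith
    constructor
    · -- along atBot : α*(t-t0) → -∞, use exp(-x)/2 bound
      have h1 : Tendsto (fun t : ℝ => α * (t - t0)) atBot atBot := by
        apply Tendsto.const_mul_atBot hα
        exact tendsto_atBot_add_const_right atBot (-t0) tendsto_id
      have h2 : Tendsto (fun t : ℝ => Real.exp (-(α * (t - t0))) / 2) atBot atTop := by
        apply Tendsto.atTop_div_const two_pos
        exact Real.tendsto_exp_atTop.comp (tendsto_neg_atBot_atTop.comp h1)
      exact tendsto_atTop_mono (fun t => hcosh_ge' (α * (t - t0))) h2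
    · have h1 : Tendsto (fun t : ℝ => α * (t - t0)) atTop atTop := by
        apply Tendsto.const_mul_atTop hα
        exact tendsto_atTop_add_const_right atTop (-t0) tendsto_id
      have h2 : Tendsto (fun t : ℝ => Real.exp (α * (t - t0)) / 2) atTop atTop := by
        apply Tendsto.atTop_div_const two_pos
        exact Real.tendsto_exp_atTop.comp h1
      exact tendsto_atTop_mono (fun t => hcosh_ge (α * (t - t0))) h2
  have hwlim : Tendsto w (cocompact ℝ) atBot := by
    have h2 := tendsto_neg_atTop_atBot.comp (hclim.const_mul_atTop hδ)
    have h1 : Tendsto (fun t => M + -(δ * c t)) (cocompact ℝ) atBot :=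
      tendsto_atBot_add_const_left _ M h2
    exact tendsto_atBot_mono (fun t => by have := hM t; simp only [hwdef]; linarith) h1
  have hwcont : Continuous w := by
    have : Differentiable ℝ w := fun t => (hw t).differentiableAt
    exact this.continuous
  obtain ⟨x, hx⟩ := hwcont.exists_forall_ge hwlim
  have hwdiff : Differentiable ℝ w := fun t => (hw t).differentiableAt
  have hL : deriv (deriv φ) x - δ * (α ^ 2 * c x) ≤ 0 :=
    second_deriv_nonpos_at_max w hwdiff x hx _ (hw2 x)
  have hcpos : (0:ℝ) < c x := lt_of_lt_of_le one_pos (Real.one_le_cosh _)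
  have hα2 : (0:ℝ) < α ^ 2 := by positivity
  have hc0 : c t0 = 1 := by simp [hcdef]
  have key : φ t0 - δ ≤ w x := by
    have := hx t0
    simp only [hwdef, hc0] at this ⊢
    linarith
  have hwx : w x ≤ N := by
    have hNx := hN x
    have : deriv (deriv w) x = deriv (deriv φ) x - δ * (α ^ 2 * c x) := (hw2 x).deriv
    have hdd : deriv (deriv w) x ≤ 0 := by rw [this]; exact hL
    have : w x = (φ x - deriv (deriv φ) x / α ^ 2) + deriv (deriv w) x / α ^ 2 := by
      rw [this]
      simp only [hwdef]
      field_simp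
      ring
    rw [this]
    have : deriv (deriv w) x / α ^ 2 ≤ 0 := div_nonpos_of_nonpos_of_nonneg hdd hα2.le
    linarith
  linarith

/-- If `φ : ℝ → ℝ` is twice differentiable, bounded, and has bounded second
derivative, and `ψ(t) = φ(t) − φ''(t)/α²` for some `α > 0`, then
`sup_t |φ t| ≤ sup_t |ψ t|`. -/
theorem sup_le_sup_of_ode (α : ℝ) (hα : 0 < α) (φ : ℝ → ℝ)
    (hdiff : Differentiable ℝ φ) (hdiff2 : Differentiable ℝ (deriv φ))
    (hbdd : ∃ M : ℝ, ∀ t, |φ t| ≤ M)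
    (hbdd2 : ∃ M : ℝ, ∀ t, |deriv (deriv φ) t| ≤ M) :
    ⨆ t : ℝ, |φ t| ≤ ⨆ t : ℝ, |φ t - deriv (deriv φ) t / α ^ 2| := by
  obtain ⟨M, hM⟩ := hbdd
  obtain ⟨K, hK⟩ := hbdd2
  have hα2 : (0:ℝ) < α ^ 2 := by positivity
  set ψ := fun t => φ t - deriv (deriv φ) t / α ^ 2 with hψ
  have hψbdd : ∀ t, |ψ t| ≤ M + K / α ^ 2 := by
    intro t
    have h1 := abs_sub (φ t) (deriv (deriv φ) t / α ^ 2)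
    have h2 : |deriv (deriv φ) t / α ^ 2| ≤ K / α ^ 2 := by
      rw [abs_div, abs_of_pos hα2]
      gcongr
      exact hK t
    calc |ψ t| ≤ |φ t| + |deriv (deriv φ) t / α ^ 2| := abs_sub _ _
      _ ≤ M + K / α ^ 2 := add_le_add (hM t) h2
  set N := ⨆ t : ℝ, |ψ t| with hNdef
  have hbddN : BddAbove (Set.range fun t => |ψ t|) := ⟨M + K / α ^ 2, by
    rintro y ⟨t, rfl⟩; exact hψbdd t⟩
  have hNle : ∀ t, ψ t ≤ N := fun t => (le_abs_self _).trans (le_ciSup hbddN t)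
  have hNle' : ∀ t, -ψ t ≤ N := fun t => (neg_le_abs _).trans (le_ciSup hbddN t)
  apply ciSup_le
  intro t0
  rw [abs_le]
  constructor
  · -- -N ≤ φ t0, i.e. (-φ) t0 ≤ N
    have hneg : deriv (deriv fun t => -φ t) = fun t => -deriv (deriv φ) t := by
      have h1 : (deriv fun t => -φ t) = fun t => -deriv φ t := funext fun t => deriv.neg
      rw [h1]
      exact funext fun t => deriv.neg
    have := key_one_sided α hα (fun t => -φ t) hdiff.neg
      (by rw [show (deriv fun t => -φ t) = fun t => -deriv φ t from funext fun t => deriv.neg]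
          exact hdiff2.neg)
      M (fun t => (neg_le_abs _).trans (hM t)) N
      (fun t => by
        rw [hneg]; simp only [neg_div]
        have h := hNle' t; simp only [hψ] at h; linarith) t0
    linarith
  · exact key_one_sided α hα φ hdiff hdiff2 M (fun t => (le_abs_self _).trans (hM t)) N hNle t0
end

section
/- Let Σ₀, Σ₁ be p×p positive definite matrices and for s ∈ [0,1] set Σ_s = (1−s)Σ₀ + sΣ₁. Then ∫₀¹ Tr( ((Σ₁−Σ₀)Σ_s^{−1})² ) ds = Tr( Σ₀Σ₁^{−1} + Σ₁Σ₀^{−1} − 2I ) = 2·Tr( (Σ₀Σ₁^{−1} + Σ₀^{−1}Σ₁)/2 − I ). -/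
open MeasureTheory Matrix

namespace IntegralTraceSqAux

variable {p : ℕ}

private lemma combo_posDef (S₀ S₁ : Matrix (Fin p) (Fin p) ℝ) (h₀ : S₀.PosDef) (h₁ : S₁.PosDef)
    {s : ℝ} (hs0 : 0 ≤ s) (hs1 : s ≤ 1) : ((1 - s) • S₀ + s • S₁).PosDef := by
  refine Matrix.PosDef.of_dotProduct_mulVec_pos ?_ ?_
  · show _ = _
    simp only [conjTranspose_add, conjTranspose_smul, h₀.1.eq, h₁.1.eq, star_trivial]
  · intro x hx
    have q0 := h₀.dotProduct_mulVec_pos hx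
    have q1 := h₁.dotProduct_mulVec_pos hx
    simp only [add_mulVec, smul_mulVec, dotProduct_add, dotProduct_smul, smul_eq_mul,
      star_trivial] at *
    rcases eq_or_lt_of_le hs0 with h | h
    · rw [← h]; simpa using q0
    · have h1 : 0 < s * (x ⬝ᵥ S₁ *ᵥ x) := mul_pos h q1
      have h2 : 0 ≤ (1 - s) * (x ⬝ᵥ S₀ *ᵥ x) := mul_nonneg (by linarith) q0.le
      linarith

section NormDeriv

attribute [local instance] Matrix.linftyOpNormedRing Matrix.linftyOpNormedAlgebra

private lemma hasDerivAt_trace (S₀ S₁ : Matrix (Fin p) (Fin p) ℝ)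
    (h₀ : S₀.PosDef) (h₁ : S₁.PosDef) {s : ℝ} (hs0 : 0 ≤ s) (hs1 : s ≤ 1) :
    HasDerivAt (fun t : ℝ => -(((S₁ - S₀) * ((1 - t) • S₀ + t • S₁)⁻¹).trace))
      ((((S₁ - S₀) * ((1 - s) • S₀ + s • S₁)⁻¹) ^ 2).trace) s := by
  set D := S₁ - S₀ with hD
  have hA : HasDerivAt (fun t : ℝ => (1 - t) • S₀ + t • S₁) D s := by
    have h1 : HasDerivAt (fun t : ℝ => (1 - t) • S₀) ((-1 : ℝ) • S₀) s :=
      (((hasDerivAt_id s).const_sub 1).smul_const S₀)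
    have h2 : HasDerivAt (fun t : ℝ => t • S₁) ((1 : ℝ) • S₁) s :=
      ((hasDerivAt_id s).smul_const S₁)
    have := h1.add h2
    convert this using 1
    all_goals try rfl
    simp [hD]
    abel
  have hM : ((1 - s) • S₀ + s • S₁).PosDef := combo_posDef S₀ S₁ h₀ h₁ hs0 hs1
  have hU : IsUnit ((1 - s) • S₀ + s • S₁) := hM.isUnit
  set M := (1 - s) • S₀ + s • S₁ with hMdef
  have hinv : HasDerivAt (fun t : ℝ => ((1 - t) • S₀ + t • S₁)⁻¹)
      (-(M⁻¹ * D * M⁻¹)) s := by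
    have hcomp := (hU.unit_spec ▸ hasFDerivAt_ringInverse (𝕜 := ℝ) hU.unit).comp_hasDerivAt s hA
    simp only [Function.comp_def, ← Matrix.nonsing_inv_eq_ringInverse] at hcomp
    convert hcomp using 1
    all_goals try rfl
    simp [Matrix.coe_units_inv, hU.unit_spec]
  -- compose with the continuous linear map X ↦ -(D * X).trace
  let L : Matrix (Fin p) (Fin p) ℝ →ₗ[ℝ] ℝ :=
    (Matrix.traceLinearMap (Fin p) ℝ ℝ).comp (LinearMap.mulLeft ℝ D)
  have hL := (LinearMap.toContinuousLinearMap L).hasFDerivAt.comp_hasDerivAt s hinv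
  have hL' : HasDerivAt (fun t : ℝ => ((D * ((1 - t) • S₀ + t • S₁)⁻¹).trace))
      (-(D * M⁻¹ * D * M⁻¹).trace) s := by
    convert hL using 2
    all_goals try rfl
    change -(D * M⁻¹ * D * M⁻¹).trace = (D * -(M⁻¹ * D * M⁻¹)).trace
    simp [Matrix.mul_assoc]
  have := hL'.neg
  convert this using 1
  all_goals try rfl
  simp [pow_two, Matrix.mul_assoc]

end NormDeriv

private lemma integrand_contOn (S₀ S₁ : Matrix (Fin p) (Fin p) ℝ)
    (h₀ : S₀.PosDef) (h₁ : S₁.PosDef) :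
    ContinuousOn (fun s : ℝ => (((S₁ - S₀) * ((1 - s) • S₀ + s • S₁)⁻¹) ^ 2).trace)
      (Set.Icc (0 : ℝ) 1) := by
  have hA : Continuous fun s : ℝ => (1 - s) • S₀ + s • S₁ :=
    ((continuous_const.sub continuous_id).smul continuous_const).add
      (continuous_id.smul continuous_const)
  have hinv : ContinuousOn (fun s : ℝ => ((1 - s) • S₀ + s • S₁)⁻¹) (Set.Icc (0 : ℝ) 1) := by
    have : ∀ s ∈ Set.Icc (0 : ℝ) 1, ((1 - s) • S₀ + s • S₁)⁻¹
        = ((1 - s) • S₀ + s • S₁).det⁻¹ • ((1 - s) • S₀ + s • S₁).adjugate := by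
      intro s hs
      rw [Matrix.inv_def, Ring.inverse_eq_inv']
    refine ContinuousOn.congr ?_ this
    refine ContinuousOn.smul (M := ℝ) ?_ hA.matrix_adjugate.continuousOn
    refine (hA.matrix_det.continuousOn).inv₀ fun s hs => ?_
    exact (combo_posDef S₀ S₁ h₀ h₁ hs.1 hs.2).det_pos.ne'
  have hsq : ContinuousOn
      (fun s : ℝ => ((S₁ - S₀) * ((1 - s) • S₀ + s • S₁)⁻¹) ^ 2) (Set.Icc (0 : ℝ) 1) :=
    (continuousOn_const.mul hinv).pow 2
  exact (continuous_id.matrix_trace).comp_continuousOn hsq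

end IntegralTraceSqAux

open IntegralTraceSqAux in
/-- For positive definite `Σ₀, Σ₁` and `Σ_s = (1−s)Σ₀ + sΣ₁`,
`∫₀¹ Tr(((Σ₁−Σ₀)Σ_s⁻¹)²) ds = Tr(Σ₀Σ₁⁻¹ + Σ₁Σ₀⁻¹ − 2I) = 2 Tr((Σ₀Σ₁⁻¹ + Σ₀⁻¹Σ₁)/2 − I)`. -/
theorem integral_trace_sq_logDeriv {p : ℕ} (S₀ S₁ : Matrix (Fin p) (Fin p) ℝ)
    (h₀ : S₀.PosDef) (h₁ : S₁.PosDef) :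
    (∫ s in Set.Ioo (0 : ℝ) 1,
        ((((S₁ - S₀) * ((1 - s) • S₀ + s • S₁)⁻¹) ^ 2).trace)
      = (S₀ * S₁⁻¹ + S₁ * S₀⁻¹ - (2 : ℝ) • (1 : Matrix (Fin p) (Fin p) ℝ)).trace) ∧
    (S₀ * S₁⁻¹ + S₁ * S₀⁻¹ - (2 : ℝ) • (1 : Matrix (Fin p) (Fin p) ℝ)).trace
      = 2 * ((2⁻¹ : ℝ) • (S₀ * S₁⁻¹ + S₀⁻¹ * S₁) - (1 : Matrix (Fin p) (Fin p) ℝ)).trace := by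
  constructor
  · have hint : IntervalIntegrable
        (fun s : ℝ => (((S₁ - S₀) * ((1 - s) • S₀ + s • S₁)⁻¹) ^ 2).trace) volume 0 1 :=
      ((integrand_contOn S₀ S₁ h₀ h₁).mono (by rw [Set.uIcc_of_le zero_le_one])).intervalIntegrable
    have hftc := intervalIntegral.integral_eq_sub_of_hasDerivAt
      (f := fun t : ℝ => -(((S₁ - S₀) * ((1 - t) • S₀ + t • S₁)⁻¹).trace))
      (fun x hx => by
        rw [Set.uIcc_of_le zero_le_one] at hx
        exact hasDerivAt_trace S₀ S₁ h₀ h₁ hx.1 hx.2) hint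
    have hioo : (∫ s in Set.Ioo (0 : ℝ) 1,
        (((S₁ - S₀) * ((1 - s) • S₀ + s • S₁)⁻¹) ^ 2).trace)
        = ∫ s in (0 : ℝ)..1, (((S₁ - S₀) * ((1 - s) • S₀ + s • S₁)⁻¹) ^ 2).trace := by
      rw [intervalIntegral.integral_of_le zero_le_one, MeasureTheory.integral_Ioc_eq_integral_Ioo]
    rw [hioo, hftc]
    simp only [sub_zero, sub_self, one_smul, zero_smul, add_zero, zero_add]
    have i0 : S₀ * S₀⁻¹ = 1 := Matrix.mul_nonsing_inv S₀ h₀.det_pos.ne'.isUnit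
    have i1 : S₁ * S₁⁻¹ = 1 := Matrix.mul_nonsing_inv S₁ h₁.det_pos.ne'.isUnit
    simp only [Matrix.sub_mul, Matrix.add_mul, i0, i1, Matrix.trace_sub, Matrix.trace_add,
      Matrix.trace_smul, smul_eq_mul, Matrix.trace_one]
    ring
  · simp only [Matrix.trace_sub, Matrix.trace_add, Matrix.trace_smul, smul_eq_mul,
      Matrix.trace_one, Matrix.trace_mul_comm S₁ S₀⁻¹]
    ring
end

section
/- Let Σ be a p×p positive definite matrix and x ~ N(0,Σ) a centered Gaussian vector in ℝ^p. There is a universal constant C < ∞ (independent of p, Σ, t, Δ) such that for all t > 0 and Δ > 0: P(x ∈ B_{t+Δ}) − P(x ∈ B_t) ≤ C·√p·( log(1+Δ/t) ∧ √(log(1+Δ/t)) ). -/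
open MeasureTheory ProbabilityTheory Matrix Set

/-- The standard Gaussian measure `N(0, I_p)` on `ℝ^p`, as a product of
one-dimensional standard Gaussians. -/
noncomputable def stdGaussian (p : ℕ) : Measure (Fin p → ℝ) :=
  Measure.pi fun _ => gaussianReal 0 1

/-- The centered multivariate Gaussian measure `N(0, S)` on `ℝ^p` with covariance
matrix `S ⪰ 0`, realized as the pushforward of the standard Gaussian under
multiplication by the positive semidefinite square root of `S`. -/
noncomputable def multiGaussian {p : ℕ} (S : Matrix (Fin p) (Fin p) ℝ)
    (hS : S.PosSemidef) : Measure (Fin p → ℝ) :=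
  (stdGaussian p).map (fun y => (hS.1.eigenvectorUnitary.1 * diagonal (((↑) : ℝ → ℝ) ∘ (√·) ∘ hS.1.eigenvalues) *
    (star hS.1.eigenvectorUnitary : Matrix (Fin p) (Fin p) ℝ)) *ᵥ y)

noncomputable def stdPdf (p : ℕ) (y : Fin p → ℝ) : ℝ := ∏ i, gaussianPDFReal 0 1 (y i)

lemma lintegral_pi_prod {n : ℕ} (μ : Measure ℝ) [SigmaFinite μ]
    (f : Fin n → ℝ → ENNReal) (hf : ∀ i, Measurable (f i)) :
    ∫⁻ y, ∏ i, f i (y i) ∂(Measure.pi fun _ : Fin n => μ) = ∏ i, ∫⁻ x, f i x ∂μ := by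
  induction n with
  | zero =>
      simp [lintegral_const, Measure.pi_univ]
  | succ n ih =>
      have hm := (measurePreserving_piFinSuccAbove (fun _ : Fin (n + 1) => μ) 0).symm
      have hF : Measurable fun y : Fin (n + 1) → ℝ => ∏ i, f i (y i) :=
        Finset.measurable_prod _ fun i _ => (hf i).comp (measurable_pi_apply i)
      rw [← hm.lintegral_comp hF]
      have heq : ∀ z : ℝ × (Fin n → ℝ),
          (∏ i, f i ((MeasurableEquiv.piFinSuccAbove (fun _ : Fin (n+1) => ℝ) 0).symm z i))
            = f 0 z.1 * ∏ j, f j.succ (z.2 j) := fun z => by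
        simp [MeasurableEquiv.piFinSuccAbove_symm_apply, Fin.insertNth_zero, Fin.prod_univ_succ]
      calc ∫⁻ z : ℝ × (Fin n → ℝ),
              (∏ i, f i ((MeasurableEquiv.piFinSuccAbove (fun _ : Fin (n+1) => ℝ) 0).symm z i))
              ∂(μ.prod (Measure.pi fun _ : Fin n => μ))
          = ∫⁻ z : ℝ × (Fin n → ℝ), f 0 z.1 * ∏ j, f j.succ (z.2 j)
              ∂(μ.prod (Measure.pi fun _ : Fin n => μ)) := lintegral_congr heq
        _ = (∫⁻ x, f 0 x ∂μ) * ∫⁻ w, ∏ j, f j.succ (w j) ∂(Measure.pi fun _ : Fin n => μ) :=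
            lintegral_prod_mul (hf 0).aemeasurable
              (Finset.measurable_prod _ fun (j : Fin n) _ =>
                (hf j.succ).comp (measurable_pi_apply j)).aemeasurable
        _ = ∏ i, ∫⁻ x, f i x ∂μ := by
            rw [ih (fun j => f j.succ) (fun j => hf j.succ), Fin.prod_univ_succ]

lemma stdGaussian_eq (p : ℕ) :
    stdGaussian p
      = (volume : Measure (Fin p → ℝ)).withDensity (fun y => ENNReal.ofReal (stdPdf p y)) := by
  rw [_root_.stdGaussian]
  refine Measure.pi_eq fun s hs => ?_
  rw [withDensity_apply _ (MeasurableSet.univ_pi hs), ← lintegral_indicator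
    (MeasurableSet.univ_pi hs) _]
  have hpt : ∀ y : Fin p → ℝ,
      (Set.univ.pi s).indicator (fun y => ENNReal.ofReal (stdPdf p y)) y
        = ∏ i, (s i).indicator (gaussianPDF 0 1) (y i) := by
    intro y
    by_cases hy : y ∈ Set.univ.pi s
    · rw [Set.indicator_of_mem hy, stdPdf,
        ENNReal.ofReal_prod_of_nonneg (fun i _ => gaussianPDFReal_nonneg 0 1 (y i))]
      refine Finset.prod_congr rfl fun i _ => ?_
      rw [Set.indicator_of_mem (hy i (Set.mem_univ i))]
      rfl
    · rw [Set.indicator_of_notMem hy]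
      rw [Set.mem_univ_pi] at hy
      push_neg at hy
      obtain ⟨j, hj⟩ := hy
      exact (Finset.prod_eq_zero (Finset.mem_univ j) (Set.indicator_of_notMem hj _)).symm
  rw [show (volume : Measure (Fin p → ℝ)) = Measure.pi fun _ => (volume : Measure ℝ) from
    volume_pi]
  rw [lintegral_congr hpt, lintegral_pi_prod _ _
    (fun i => (measurable_gaussianPDF 0 1).indicator (hs i))]
  refine Finset.prod_congr rfl fun i _ => ?_
  rw [lintegral_indicator (hs i) _, gaussianReal_apply 0 one_ne_zero]

lemma stdPdf_nonneg (p : ℕ) (y : Fin p → ℝ) : 0 ≤ stdPdf p y :=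
  Finset.prod_nonneg fun i _ => gaussianPDFReal_nonneg 0 1 (y i)

lemma stdPdf_continuous (p : ℕ) : Continuous (stdPdf p) := by
  refine continuous_finset_prod _ fun i _ => ?_
  have h1 : Continuous (gaussianPDFReal 0 1) := by
    unfold gaussianPDFReal
    fun_prop
  exact h1.comp (continuous_apply i)

lemma stdPdf_integrable (p : ℕ) : Integrable (stdPdf p) (volume : Measure (Fin p → ℝ)) :=
  Integrable.fintype_prod (𝕜 := ℝ) (f := fun _ : Fin p => gaussianPDFReal 0 1)
    (fun _ => integrable_gaussianPDFReal 0 1)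

lemma stdPdf_integral_one (p : ℕ) : ∫ y, stdPdf p y = 1 := by
  rw [show (∫ y, stdPdf p y) = ∫ y : Fin p → ℝ, ∏ i, gaussianPDFReal 0 1 (y i) from rfl,
    MeasureTheory.integral_fintype_prod_volume_eq_prod (𝕜 := ℝ)]
  simp [integral_gaussianPDFReal_eq_one 0 one_ne_zero]

lemma stdGaussian_apply_toReal (p : ℕ) {E : Set (Fin p → ℝ)} (hE : MeasurableSet E) :
    (stdGaussian p E).toReal = ∫ y, E.indicator (stdPdf p) y := by
  rw [stdGaussian_eq, withDensity_apply _ hE, ← lintegral_indicator hE]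
  have h1 : ∀ y, ENNReal.ofReal (E.indicator (stdPdf p) y)
      = E.indicator (fun y => ENNReal.ofReal (stdPdf p y)) y := by
    intro y
    by_cases hy : y ∈ E <;> simp [hy]
  rw [← lintegral_congr h1, ← ofReal_integral_eq_lintegral_ofReal
    ((stdPdf_integrable p).indicator hE)
    (Filter.Eventually.of_forall fun y => Set.indicator_nonneg (fun x _ => stdPdf_nonneg p x) y)]
  rw [ENNReal.toReal_ofReal (integral_nonneg fun y =>
    Set.indicator_nonneg (fun x _ => stdPdf_nonneg p x) y)]

lemma integral_comp_smul_pi (p : ℕ) (F : (Fin p → ℝ) → ℝ) {c : ℝ} (hc : 0 < c) :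
    ∫ x, F (c • x) = (c ^ p)⁻¹ * ∫ x, F x := by
  rw [MeasureTheory.Measure.integral_comp_smul_of_nonneg
      (volume : Measure (Fin p → ℝ)) F c (hR := hc.le), Module.finrank_fin_fun]
  simp [smul_eq_mul]

lemma stdPdf_smul (p : ℕ) (c : ℝ) (x : Fin p → ℝ) :
    stdPdf p (c • x) = stdPdf p x * Real.exp (-(c ^ 2 - 1) / 2 * ∑ i, x i ^ 2) := by
  unfold stdPdf
  have h1 : ∀ i : Fin p, gaussianPDFReal 0 1 (c * x i)
      = gaussianPDFReal 0 1 (x i) * Real.exp (-(c ^ 2 - 1) / 2 * x i ^ 2) := by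
    intro i
    unfold gaussianPDFReal
    conv_rhs => rw [mul_assoc, ← Real.exp_add]
    congr 1
    push_cast
    ring
  calc (∏ i, gaussianPDFReal 0 1 ((c • x) i))
      = ∏ i, (gaussianPDFReal 0 1 (x i) * Real.exp (-(c ^ 2 - 1) / 2 * x i ^ 2)) := by
        refine Finset.prod_congr rfl fun i _ => ?_
        rw [Pi.smul_apply, smul_eq_mul, h1 i]
    _ = (∏ i, gaussianPDFReal 0 1 (x i)) * ∏ i, Real.exp (-(c ^ 2 - 1) / 2 * x i ^ 2) :=
        Finset.prod_mul_distrib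
    _ = (∏ i, gaussianPDFReal 0 1 (x i)) * Real.exp (-(c ^ 2 - 1) / 2 * ∑ i, x i ^ 2) := by
        rw [← Real.exp_sum, ← Finset.mul_sum]

lemma numeric_aux {a : ℝ} (h0 : 0 ≤ a) (h1 : a ≤ 1) :
    (1:ℝ) / (1 - a / 2) ≤ 1 + a := by
  rw [div_le_iff₀ (by linarith)]
  nlinarith

lemma key_lemma (p : ℕ) (q : (Fin p → ℝ) → ℝ) (hq_cont : Continuous q)
    (hq_smul : ∀ (c : ℝ) y, q (c • y) = c ^ 2 * q y) {t δ : ℝ} (ht : 0 < t) (hδ : 0 < δ)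
    (hδ1 : δ ≤ 1) :
    (stdGaussian p {y | q y < (1 + δ) * t}).toReal
      - (stdGaussian p {y | q y < t}).toReal
    ≤ Real.sqrt p * δ := by
  haveI : IsProbabilityMeasure (stdGaussian p) := by
    rw [_root_.stdGaussian]; infer_instance
  set g := stdPdf p with hg_def
  have hg_nonneg := stdPdf_nonneg p
  have hg_int : Integrable g (volume : Measure (Fin p → ℝ)) := stdPdf_integrable p
  have hg_cont : Continuous g := stdPdf_continuous p
  have hg_one : ∫ y, g y = 1 := stdPdf_integral_one p
  have hBs : ∀ s : ℝ, MeasurableSet {y : Fin p → ℝ | q y < s} := fun s =>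
    measurableSet_lt hq_cont.measurable measurable_const
  -- constants
  set c := Real.sqrt (1 + δ) with hc_def
  have hc2 : c ^ 2 = 1 + δ := Real.sq_sqrt (by linarith)
  have hc0 : 0 < c := Real.sqrt_pos.2 (by linarith)
  have hc1 : 1 ≤ c := Real.one_le_sqrt.2 (by linarith)
  have hcp1 : 1 ≤ c ^ p := one_le_pow₀ hc1
  have hcp0 : (0:ℝ) < c ^ p := lt_of_lt_of_le one_pos hcp1
  have hn0 : ∀ x : Fin p → ℝ, 0 ≤ ∑ i, x i ^ 2 := fun x =>
    Finset.sum_nonneg fun i _ => sq_nonneg _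
  set ρ : (Fin p → ℝ) → ℝ := fun x => c ^ p * Real.exp (-(c ^ 2 - 1) / 2 * ∑ i, x i ^ 2)
    with hρ_def
  have hρx : ∀ x : Fin p → ℝ, ρ x = c ^ p * Real.exp (-(c ^ 2 - 1) / 2 * ∑ i, x i ^ 2) :=
    fun x => rfl
  have hρ_pos : ∀ x, 0 < ρ x := fun x => mul_pos hcp0 (Real.exp_pos _)
  have hρ_le : ∀ x, ρ x ≤ c ^ p := by
    intro x
    have h1 : -(c ^ 2 - 1) / 2 * ∑ i, x i ^ 2 ≤ 0 := by
      have h2 : (0:ℝ) ≤ c ^ 2 - 1 := by rw [hc2]; linarith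
      have h3 := hn0 x
      nlinarith
    have h2 := Real.exp_le_one_iff.2 h1
    rw [hρx x]
    nlinarith [Real.exp_pos (-(c ^ 2 - 1) / 2 * ∑ i, x i ^ 2)]
  have hρ_cont : Continuous ρ := by
    refine continuous_const.mul (Real.continuous_exp.comp ?_)
    exact continuous_const.mul (continuous_finset_sum _ fun i _ => (continuous_apply i).pow 2)
  -- integrability of F * g for bounded continuous F
  have hmono : ∀ (k : ℝ) (F : (Fin p → ℝ) → ℝ), Continuous F → (∀ x, |F x| ≤ k) →
      Integrable (fun x => F x * g x) (volume : Measure (Fin p → ℝ)) := by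
    intro k F hFc hFb
    refine Integrable.mono' (hg_int.const_mul k) ((hFc.mul hg_cont).aestronglyMeasurable) ?_
    refine Filter.Eventually.of_forall fun x => ?_
    rw [Real.norm_eq_abs, abs_mul, abs_of_nonneg (hg_nonneg x)]
    exact mul_le_mul_of_nonneg_right (hFb x) (hg_nonneg x)
  have habsρ : ∀ x, |ρ x| ≤ c ^ p := fun x => by
    rw [abs_of_pos (hρ_pos x)]; exact hρ_le x
  have int_ρg : Integrable (fun x => ρ x * g x) (volume : Measure (Fin p → ℝ)) :=
    hmono (c ^ p) ρ hρ_cont habsρ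
  have int_ρ2g : Integrable (fun x => ρ x ^ 2 * g x) (volume : Measure (Fin p → ℝ)) := by
    refine hmono (c ^ p * c ^ p) (fun x => ρ x ^ 2) (hρ_cont.pow 2) fun x => ?_
    show |ρ x ^ 2| ≤ c ^ p * c ^ p
    rw [abs_of_nonneg (sq_nonneg _)]
    nlinarith [hρ_le x, (hρ_pos x).le]
  have habsw : ∀ x, |ρ x - 1| ≤ c ^ p := fun x =>
    abs_le.2 ⟨by nlinarith [hρ_pos x], by nlinarith [hρ_le x]⟩
  have int_wg : Integrable (fun x => (ρ x - 1) * g x) (volume : Measure (Fin p → ℝ)) :=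
    hmono (c ^ p) _ (hρ_cont.sub continuous_const) habsw
  have int_awg : Integrable (fun x => |ρ x - 1| * g x) (volume : Measure (Fin p → ℝ)) :=
    hmono (c ^ p) _ (hρ_cont.sub continuous_const).abs fun x => by
      show abs |ρ x - 1| ≤ c ^ p
      rw [abs_abs]; exact habsw x
  have int_w2g : Integrable (fun x => (ρ x - 1) ^ 2 * g x) (volume : Measure (Fin p → ℝ)) := by
    refine hmono (c ^ p * c ^ p) _ (((hρ_cont.sub continuous_const).pow 2)) fun x => ?_
    show |(ρ x - 1) ^ 2| ≤ c ^ p * c ^ p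
    rw [abs_of_nonneg (sq_nonneg _), sq]
    have h := habsw x
    nlinarith [abs_nonneg (ρ x - 1), neg_abs_le (ρ x - 1), le_abs_self (ρ x - 1)]
  -- Step A: scaling identity
  have hm0iff : ∀ x : Fin p → ℝ, (c • x) ∈ {y | q y < (1 + δ) * t} ↔ x ∈ {y | q y < t} := by
    intro x
    simp only [Set.mem_setOf_eq, hq_smul, hc2]
    exact mul_lt_mul_iff_right₀ (by linarith)
  have hptA : ∀ x : Fin p → ℝ, ({y | q y < (1 + δ) * t}).indicator g (c • x)
      = (c ^ p)⁻¹ * ({y | q y < t}).indicator (fun x => ρ x * g x) x := by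
    intro x
    by_cases hx : x ∈ {y | q y < t}
    · rw [Set.indicator_of_mem ((hm0iff x).2 hx), Set.indicator_of_mem hx]
      show stdPdf p (c • x)
        = (c ^ p)⁻¹ * (c ^ p * Real.exp (-(c ^ 2 - 1) / 2 * ∑ i, x i ^ 2) * stdPdf p x)
      rw [stdPdf_smul p c x]
      field_simp
    · rw [Set.indicator_of_notMem (fun h => hx ((hm0iff x).1 h)),
        Set.indicator_of_notMem hx, mul_zero]
  have hstepA : ∫ y, ({y | q y < (1 + δ) * t}).indicator g y
      = ∫ x, ({y | q y < t}).indicator (fun x => ρ x * g x) x := by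
    have h1 := integral_comp_smul_pi p (({y | q y < (1 + δ) * t}).indicator g) hc0
    rw [integral_congr_ae (Filter.Eventually.of_forall hptA), integral_const_mul] at h1
    exact (mul_left_cancel₀ (inv_ne_zero (ne_of_gt hcp0)) h1).symm
  -- moments
  have hEρ : ∫ x, ρ x * g x = 1 := by
    have hpt : ∀ x : Fin p → ℝ, ρ x * g x = c ^ p * g (c • x) := by
      intro x
      show c ^ p * Real.exp (-(c ^ 2 - 1) / 2 * ∑ i, x i ^ 2) * stdPdf p x
        = c ^ p * stdPdf p (c • x)
      rw [stdPdf_smul p c x]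
      ring
    rw [integral_congr_ae (Filter.Eventually.of_forall hpt), integral_const_mul,
      integral_comp_smul_pi p g hc0, hg_one]
    field_simp
  set s1 := Real.sqrt (1 + 2 * δ) with hs1_def
  have hs2 : s1 ^ 2 = 1 + 2 * δ := Real.sq_sqrt (by linarith)
  have hs0 : 0 < s1 := Real.sqrt_pos.2 (by linarith)
  set M : ℝ := ((1 + δ) / s1) ^ p with hM_def
  have hEρ2 : ∫ x, ρ x ^ 2 * g x = M := by
    have hpt : ∀ x : Fin p → ℝ, ρ x ^ 2 * g x = (c ^ p) ^ 2 * g (s1 • x) := by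
      intro x
      show (c ^ p * Real.exp (-(c ^ 2 - 1) / 2 * ∑ i, x i ^ 2)) ^ 2 * stdPdf p x
        = (c ^ p) ^ 2 * stdPdf p (s1 • x)
      rw [stdPdf_smul p s1 x, hs2, hc2]
      rw [mul_pow, sq (Real.exp _), ← Real.exp_add]
      have h5 : -(1 + δ - 1) / 2 * (∑ i, x i ^ 2) + -(1 + δ - 1) / 2 * (∑ i, x i ^ 2)
          = -(1 + 2 * δ - 1) / 2 * ∑ i, x i ^ 2 := by
        ring
      rw [h5]
      ring
    rw [integral_congr_ae (Filter.Eventually.of_forall hpt), integral_const_mul,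
      integral_comp_smul_pi p g hs0, hg_one, hM_def]
    have hcc : (c ^ p) ^ 2 = (1 + δ) ^ p := by
      rw [← pow_mul, mul_comm p 2, pow_mul, hc2]
    rw [mul_one, div_pow, division_def, hcc]
  have hEw2 : ∫ x, (ρ x - 1) ^ 2 * g x = M - 1 := by
    have hpt : ∀ x : Fin p → ℝ, (ρ x - 1) ^ 2 * g x
        = ρ x ^ 2 * g x - 2 * (ρ x * g x) + g x := by
      intro x; ring
    have intA : Integrable (fun x => ρ x ^ 2 * g x - 2 * (ρ x * g x))
        (volume : Measure (Fin p → ℝ)) := int_ρ2g.sub (int_ρg.const_mul 2)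
    rw [integral_congr_ae (Filter.Eventually.of_forall hpt)]
    rw [integral_add intA hg_int, integral_sub int_ρ2g (int_ρg.const_mul 2),
      integral_const_mul, hEρ2, hEρ, hg_one]
    ring
  -- Cauchy-Schwarz
  set m : ℝ := ∫ x, |ρ x - 1| * g x with hm_def
  have hm0 : 0 ≤ m :=
    integral_nonneg fun x => mul_nonneg (abs_nonneg _) (hg_nonneg x)
  have hms : m ^ 2 ≤ M - 1 := by
    have h0 : 0 ≤ ∫ x, (|ρ x - 1| - m) ^ 2 * g x :=
      integral_nonneg fun x => mul_nonneg (sq_nonneg _) (hg_nonneg x)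
    have hpt : ∀ x : Fin p → ℝ, (|ρ x - 1| - m) ^ 2 * g x
        = (ρ x - 1) ^ 2 * g x - 2 * m * (|ρ x - 1| * g x) + m ^ 2 * g x := by
      intro x
      have h1 : |ρ x - 1| ^ 2 = (ρ x - 1) ^ 2 := sq_abs _
      rw [sub_sq, h1]
      ring
    have intB : Integrable (fun x => (ρ x - 1) ^ 2 * g x - 2 * m * (|ρ x - 1| * g x))
        (volume : Measure (Fin p → ℝ)) := int_w2g.sub (int_awg.const_mul (2 * m))
    have intC : Integrable (fun x => m ^ 2 * g x) (volume : Measure (Fin p → ℝ)) :=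
      hg_int.const_mul (m ^ 2)
    rw [integral_congr_ae (Filter.Eventually.of_forall hpt)] at h0
    rw [integral_add intB intC, integral_sub int_w2g (int_awg.const_mul (2 * m)),
      integral_const_mul, integral_const_mul, hEw2, ← hm_def, hg_one] at h0
    nlinarith [h0]
  -- difference bounded by m
  have hD : ((stdGaussian p) {y | q y < (1 + δ) * t}).toReal
      - ((stdGaussian p) {y | q y < t}).toReal ≤ m := by
    rw [stdGaussian_apply_toReal p (hBs ((1 + δ) * t)), stdGaussian_apply_toReal p (hBs t)]
    rw [← hg_def, hstepA]
    have intD : Integrable (fun x => ({y | q y < t}).indicator (fun x => ρ x * g x) x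
        - ({y | q y < t}).indicator g x) (volume : Measure (Fin p → ℝ)) :=
      (int_ρg.indicator (hBs t)).sub (hg_int.indicator (hBs t))
    rw [← integral_sub (int_ρg.indicator (hBs t)) (hg_int.indicator (hBs t))]
    refine integral_mono intD int_awg fun x => ?_
    by_cases hx : x ∈ {y | q y < t}
    · simp only [Set.indicator_of_mem hx]
      have h1 := hg_nonneg x
      have h2 := abs_nonneg (ρ x - 1)
      nlinarith [le_abs_self (ρ x - 1)]
    · simp only [Set.indicator_of_notMem hx, sub_zero, sub_self]
      exact mul_nonneg (abs_nonneg _) (hg_nonneg x)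
  -- endgame
  set u := δ ^ 2 / (1 + 2 * δ) with hu_def
  have hu0 : 0 ≤ u := by positivity
  have hpu0 : (0:ℝ) ≤ (p : ℝ) * u := mul_nonneg (Nat.cast_nonneg p) hu0
  have huδ : u ≤ δ ^ 2 := div_le_self (sq_nonneg δ) (by linarith)
  have hsqu : Real.sqrt u ≤ δ := by
    calc Real.sqrt u ≤ Real.sqrt (δ ^ 2) := Real.sqrt_le_sqrt huδ
    _ = δ := Real.sqrt_sq hδ.le
  have hsqpu : Real.sqrt ((p : ℝ) * u) ≤ Real.sqrt p * δ := by
    rw [Real.sqrt_mul (Nat.cast_nonneg p)]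
    exact mul_le_mul_of_nonneg_left hsqu (Real.sqrt_nonneg _)
  have hM_exp : M ≤ Real.exp ((p : ℝ) * u / 2) := by
    have h1u : 1 + u = (1 + δ) ^ 2 / (1 + 2 * δ) := by
      rw [hu_def]; field_simp; ring
    have hfrac : (1 + δ) / s1 = Real.sqrt (1 + u) := by
      rw [h1u, Real.sqrt_div (sq_nonneg _), Real.sqrt_sq (by linarith : (0:ℝ) ≤ 1 + δ), hs1_def]
    have hsqle : Real.sqrt (1 + u) ≤ Real.exp (u / 2) := by
      have h2 : 1 + u ≤ Real.exp u := by linarith [Real.add_one_le_exp u]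
      have h3 : Real.exp u = (Real.exp (u / 2)) ^ 2 := by
        rw [sq, ← Real.exp_add, add_halves]
      calc Real.sqrt (1 + u) ≤ Real.sqrt (Real.exp u) := Real.sqrt_le_sqrt h2
      _ = Real.exp (u / 2) := by rw [h3, Real.sqrt_sq (Real.exp_nonneg _)]
    calc M = (Real.sqrt (1 + u)) ^ p := by rw [hM_def, hfrac]
      _ ≤ (Real.exp (u / 2)) ^ p := pow_le_pow_left₀ (Real.sqrt_nonneg _) hsqle p
      _ = Real.exp ((p : ℝ) * (u / 2)) := (Real.exp_nat_mul _ p).symm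
      _ = Real.exp ((p : ℝ) * u / 2) := by rw [mul_div_assoc]
  rcases le_or_gt ((p : ℝ) * u) 1 with hcase | hcase
  · have hx2 : (p : ℝ) * u / 2 < 1 := by linarith
    have hexp := Real.exp_bound_div_one_sub_of_interval
      (x := (p : ℝ) * u / 2) (by positivity) hx2
    have hM1 : M - 1 ≤ (p : ℝ) * u := by
      have h12 := numeric_aux hpu0 hcase
      linarith [hM_exp, hexp]
    have hm_le : m ≤ Real.sqrt ((p : ℝ) * u) := by
      refine (Real.le_sqrt hm0 hpu0).2 ?_
      linarith
    linarith [hD, hm_le, hsqpu]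
  · have h1 : (stdGaussian p) {y | q y < (1 + δ) * t} ≤ 1 := prob_le_one
    have h2 : ((stdGaussian p) {y | q y < (1 + δ) * t}).toReal ≤ 1 := by
      have := ENNReal.toReal_mono ENNReal.one_ne_top h1
      simpa using this
    have h3 : (0:ℝ) ≤ ((stdGaussian p) {y | q y < t}).toReal := ENNReal.toReal_nonneg
    have h1le : (1:ℝ) ≤ Real.sqrt ((p : ℝ) * u) := Real.one_le_sqrt.2 hcase.le
    linarith [hsqpu]

/-- **Anti-concentration** for Gaussian Euclidean norms: there is a universal
constant `C < ∞` (independent of `p`, `Σ`, `t`, `Δ`) such that for every centered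
Gaussian `x ~ N(0,Σ)` with `Σ ≻ 0` and all `t, Δ > 0`,
`P(x ∈ B_{t+Δ}) − P(x ∈ B_t) ≤ C √p (log(1+Δ/t) ∧ √(log(1+Δ/t)))`. -/
theorem anti_concentration :
    ∃ C : ℝ, ∀ (p : ℕ) (S : Matrix (Fin p) (Fin p) ℝ) (hS : S.PosDef) (t Δ : ℝ),
      0 < t → 0 < Δ →
      ((multiGaussian S hS.posSemidef) {x | ∑ i, x i ^ 2 < t + Δ}).toReal
          - ((multiGaussian S hS.posSemidef) {x | ∑ i, x i ^ 2 < t}).toReal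
        ≤ C * Real.sqrt p
            * min (Real.log (1 + Δ / t)) (Real.sqrt (Real.log (1 + Δ / t))) := by
  refine ⟨2, fun p S hS t Δ ht hΔ => ?_⟩
  haveI : IsProbabilityMeasure (stdGaussian p) := by
    rw [_root_.stdGaussian]; infer_instance
  set A := (hS.posSemidef.1.eigenvectorUnitary.1 * diagonal (((↑) : ℝ → ℝ) ∘ (√·) ∘ hS.posSemidef.1.eigenvalues) *
    (star hS.posSemidef.1.eigenvectorUnitary : Matrix (Fin p) (Fin p) ℝ)) with hA_def
  set δ := Δ / t with hδ_def
  have hδ : 0 < δ := div_pos hΔ ht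
  set L := Real.log (1 + δ) with hL_def
  have hL0 : 0 ≤ L := Real.log_nonneg (by linarith)
  -- the quadratic form
  set q : (Fin p → ℝ) → ℝ := fun y => ∑ i, (A *ᵥ y) i ^ 2 with hq_def
  have hq_cont : Continuous q := by
    refine continuous_finset_sum _ fun i _ => ?_
    have : Continuous fun y : Fin p → ℝ => (A *ᵥ y) i := by
      simp only [Matrix.mulVec, dotProduct]
      exact continuous_finset_sum _ fun j _ => continuous_const.mul (continuous_apply j)
    exact this.pow 2
  have hq_smul : ∀ (c : ℝ) y, q (c • y) = c ^ 2 * q y := by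
    intro c y
    simp only [hq_def, Matrix.mulVec_smul, Pi.smul_apply, smul_eq_mul, mul_pow,
      ← Finset.mul_sum]
  have hA_meas : Measurable fun y : Fin p → ℝ => A *ᵥ y := by
    refine measurable_pi_lambda _ fun i => ?_
    simp only [Matrix.mulVec, dotProduct]
    exact Finset.measurable_sum _ fun j _ => (measurable_pi_apply j).const_mul _
  have hset : ∀ s : ℝ, MeasurableSet {x : Fin p → ℝ | ∑ i, x i ^ 2 < s} := by
    intro s
    have : Continuous fun x : Fin p → ℝ => ∑ i, x i ^ 2 :=
      continuous_finset_sum _ fun i _ => (continuous_apply i).pow 2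
    exact measurableSet_lt this.measurable measurable_const
  have hmap : ∀ s : ℝ, (multiGaussian S hS.posSemidef) {x | ∑ i, x i ^ 2 < s}
      = stdGaussian p {y | q y < s} := by
    intro s
    rw [multiGaussian, Measure.map_apply hA_meas (hset s)]
    rfl
  rw [hmap, hmap]
  rcases Nat.eq_zero_or_pos p with hp | hp
  · subst hp
    have hsets : {y : Fin 0 → ℝ | q y < t + Δ} = {y : Fin 0 → ℝ | q y < t} := by
      ext y
      simp only [Set.mem_setOf_eq, hq_def]
      simp [Finset.univ_eq_empty]
      constructor <;> intro <;> linarith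
    rw [hsets, sub_self]
    have : Real.sqrt ((0:ℕ):ℝ) = 0 := by norm_num
    rw [this]
    ring_nf
    positivity
  · have hp1 : (1:ℝ) ≤ (p:ℝ) := by exact_mod_cast hp
    have hsp : (1:ℝ) ≤ Real.sqrt p := Real.one_le_sqrt.2 hp1
    have htΔ : t + Δ = (1 + δ) * t := by
      rw [hδ_def]; field_simp
    rw [htΔ]
    rcases le_or_gt δ 1 with hδ1 | hδ1
    · -- small δ
      have hkey := key_lemma p q hq_cont hq_smul ht hδ hδ1
      have hLδ : δ ≤ 2 * L := by
        have hexp : Real.exp (δ / 2) ≤ 1 + δ := by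
          have h1 := Real.exp_bound_div_one_sub_of_interval
            (x := δ / 2) (by linarith) (by linarith)
          have h2 : (1:ℝ) / (1 - δ / 2) ≤ 1 + δ := by
            rw [div_le_iff₀ (by linarith)]
            nlinarith
          linarith
        have := Real.le_log_iff_exp_le (by linarith : (0:ℝ) < 1 + δ) |>.2 hexp
        rw [hL_def]; linarith
      have hL1 : L ≤ 1 := by
        have := Real.log_le_sub_one_of_pos (by linarith : (0:ℝ) < 1 + δ)
        rw [hL_def]; linarith
      have hmin : min L (Real.sqrt L) = L := by
        refine min_eq_left ((Real.le_sqrt hL0 hL0).2 ?_)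
        nlinarith
      rw [hmin]
      calc (stdGaussian p {y | q y < (1 + δ) * t}).toReal
            - (stdGaussian p {y | q y < t}).toReal
          ≤ Real.sqrt p * δ := hkey
        _ ≤ Real.sqrt p * (2 * L) := by
            exact mul_le_mul_of_nonneg_left hLδ (Real.sqrt_nonneg _)
        _ = 2 * Real.sqrt p * L := by ring
    · -- big δ
      have hlog2 : Real.log 2 ≤ L := by
        rw [hL_def]
        exact Real.log_le_log (by norm_num) (by linarith)
      have hlog2' := Real.log_two_gt_d9
      have hlog2'' := Real.log_two_lt_d9
      have hminge : Real.log 2 ≤ min L (Real.sqrt L) := by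
        refine le_min hlog2 ?_
        calc Real.log 2 ≤ Real.sqrt (Real.log 2) := by
              refine (Real.le_sqrt (by linarith) (by linarith)).2 ?_
              nlinarith
          _ ≤ Real.sqrt L := Real.sqrt_le_sqrt hlog2
      have hD1 : (stdGaussian p {y | q y < (1 + δ) * t}).toReal
          - (stdGaussian p {y | q y < t}).toReal ≤ 1 := by
        have h1 : (stdGaussian p) {y | q y < (1 + δ) * t} ≤ 1 := prob_le_one
        have h2 : ((stdGaussian p) {y | q y < (1 + δ) * t}).toReal ≤ 1 := by
          have := ENNReal.toReal_mono ENNReal.one_ne_top h1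
          simpa using this
        have h3 : (0:ℝ) ≤ ((stdGaussian p) {y | q y < t}).toReal := ENNReal.toReal_nonneg
        linarith
      have hmin0 : (0:ℝ) ≤ min L (Real.sqrt L) := le_min hL0 (Real.sqrt_nonneg _)
      calc (stdGaussian p {y | q y < (1 + δ) * t}).toReal
            - (stdGaussian p {y | q y < t}).toReal
          ≤ 1 := hD1
        _ ≤ 2 * Real.sqrt p * min L (Real.sqrt L) := by
            nlinarith [hminge, hsp, hmin0]
end
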